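/- Given swap data (G, H, ι₁, ι₂, ι₃, ι₄, ρ₁₂, ρ₂₃, ρ₃₄, ρ₁₃, ρ₂₄), let S ⊆ G be closed under conjugation, let r, k, μ be natural numbers, and suppose: each of ρ₁₂, ρ₂₃, ρ₃₄, ρ₁₃, ρ₂₄ is a product of r elements of S; t ∈ H is such that ι₁(t) is a product of k elements of S; for every natural number m there exist A, B ∈ H with t^m * (B⁻¹*A⁻¹*B*A) = 1 in H; m₁, m₂, m₃, m₄ ∈ G commute pairwise and each m_i is a product of μ elements of S; z ∈ G; ρ₁₃ = ρ₁₂⁻¹*ρ₂₃*ρ₁₂ and ρ₂₄ = ρ₂₃⁻¹*ρ₃₄*ρ₂₃; and (ρ₃₄*ρ₂₃*ρ₁₂)^4 = z*m₄⁻⁴*m₃⁻⁴*m₂⁻⁴*m₁⁻⁴. Then for every natural number m, the element z is a product of k*m + 12*r + 16*μ elements of S. In particular, if k ≥ 1 then z admits factorizations into elements of S of arbitrarily large length. -/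
import Mathlib


/-- Swap data: two groups `G`, `H`, four commuting implantings `ι₁, …, ι₄ : H →* G`
and five "swap" elements `ρ₁₂, ρ₂₃, ρ₃₄, ρ₁₃, ρ₂₄` of `G`, such that each `ρᵢⱼ`
exchanges the images of `ιᵢ` and `ιⱼ` under conjugation and commutes with the
images of the remaining implantings. -/
structure SwapData (G H : Type*) [Group G] [Group H] where
  ι₁ : H →* G
  ι₂ : H →* G
  ι₃ : H →* G
  ι₄ : H →* G
  ρ12 : G
  ρ23 : G
  ρ34 : G
  ρ13 : G
  ρ24 : G
  comm12 : ∀ x y : H, ι₁ x * ι₂ y = ι₂ y * ι₁ x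
  comm13 : ∀ x y : H, ι₁ x * ι₃ y = ι₃ y * ι₁ x
  comm14 : ∀ x y : H, ι₁ x * ι₄ y = ι₄ y * ι₁ x
  comm23 : ∀ x y : H, ι₂ x * ι₃ y = ι₃ y * ι₂ x
  comm24 : ∀ x y : H, ι₂ x * ι₄ y = ι₄ y * ι₂ x
  comm34 : ∀ x y : H, ι₃ x * ι₄ y = ι₄ y * ι₃ x
  swap12_a : ∀ C : H, ι₁ C * ρ12 = ρ12 * ι₂ C
  swap12_b : ∀ C : H, ι₂ C * ρ12 = ρ12 * ι₁ C
  swap23_a : ∀ C : H, ι₂ C * ρ23 = ρ23 * ι₃ C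
  swap23_b : ∀ C : H, ι₃ C * ρ23 = ρ23 * ι₂ C
  swap34_a : ∀ C : H, ι₃ C * ρ34 = ρ34 * ι₄ C
  swap34_b : ∀ C : H, ι₄ C * ρ34 = ρ34 * ι₃ C
  swap13_a : ∀ C : H, ι₁ C * ρ13 = ρ13 * ι₃ C
  swap13_b : ∀ C : H, ι₃ C * ρ13 = ρ13 * ι₁ C
  swap24_a : ∀ C : H, ι₂ C * ρ24 = ρ24 * ι₄ C
  swap24_b : ∀ C : H, ι₄ C * ρ24 = ρ24 * ι₂ C
  fix12_3 : ∀ C : H, ι₃ C * ρ12 = ρ12 * ι₃ C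
  fix12_4 : ∀ C : H, ι₄ C * ρ12 = ρ12 * ι₄ C
  fix23_1 : ∀ C : H, ι₁ C * ρ23 = ρ23 * ι₁ C
  fix23_4 : ∀ C : H, ι₄ C * ρ23 = ρ23 * ι₄ C
  fix34_1 : ∀ C : H, ι₁ C * ρ34 = ρ34 * ι₁ C
  fix34_2 : ∀ C : H, ι₂ C * ρ34 = ρ34 * ι₂ C
  fix13_2 : ∀ C : H, ι₂ C * ρ13 = ρ13 * ι₂ C
  fix13_4 : ∀ C : H, ι₄ C * ρ13 = ρ13 * ι₄ C
  fix24_1 : ∀ C : H, ι₁ C * ρ24 = ρ24 * ι₁ C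
  fix24_3 : ∀ C : H, ι₃ C * ρ24 = ρ24 * ι₃ C

/-- `x` is a product of `n` elements of `S`. -/
def IsProductOf {G : Type*} [Monoid G] (S : Set G) (n : ℕ) (x : G) : Prop :=
  ∃ l : List G, l.length = n ∧ (∀ y ∈ l, y ∈ S) ∧ l.prod = x

section Aux

variable {G H : Type*} [Group G] [Group H]

theorem IsProductOf.mul' {S : Set G} {a b : ℕ} {x y : G}
    (hx : IsProductOf S a x) (hy : IsProductOf S b y) :
    IsProductOf S (a + b) (x * y) := by
  obtain ⟨l, hl, hls, hlp⟩ := hx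
  obtain ⟨l', hl', hls', hlp'⟩ := hy
  refine ⟨l ++ l', by simp [hl, hl'], ?_, by simp [hlp, hlp']⟩
  intro u hu
  rcases List.mem_append.1 hu with h | h
  · exact hls u h
  · exact hls' u h

theorem IsProductOf.pow' {S : Set G} {a : ℕ} {x : G}
    (hx : IsProductOf S a x) (m : ℕ) : IsProductOf S (a * m) (x ^ m) := by
  induction m with
  | zero => exact ⟨[], rfl, by simp, by simp⟩
  | succ n ih =>
    rw [pow_succ, Nat.mul_succ]
    exact ih.mul' hx

private theorem conj_list_prod (g : G) :
    ∀ l : List G, (l.map fun s => g * s * g⁻¹).prod = g * l.prod * g⁻¹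
  | [] => by simp
  | a :: tl => by
    rw [List.map_cons, List.prod_cons, List.prod_cons, conj_list_prod g tl]
    group

theorem IsProductOf.conj' {S : Set G} (hS : ∀ g s : G, s ∈ S → g * s * g⁻¹ ∈ S)
    {n : ℕ} {x : G} (hx : IsProductOf S n x) (g : G) :
    IsProductOf S n (g * x * g⁻¹) := by
  obtain ⟨l, hl, hls, hlp⟩ := hx
  refine ⟨l.map fun s => g * s * g⁻¹, by simp [hl], ?_, ?_⟩
  · intro y hy
    obtain ⟨s, hs, rfl⟩ := List.mem_map.1 hy
    exact hS g s (hls s hs)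
  · rw [conj_list_prod, hlp]

theorem IsProductOf.count_eq {S : Set G} {n n' : ℕ} {x : G}
    (hx : IsProductOf S n x) (h : n = n') : IsProductOf S n' x := h ▸ hx

private theorem mul_rotate_ctx {G : Type*} [Group G] {a b w w' : G} (h : a * w = w' * b)
    (x : G) : a * (w * x) = w' * (b * x) := by rw [← mul_assoc, h, mul_assoc]

/-- The basic word `W = ρ₃₄ρ₂₃ρ₁₂`. -/
def SwapData.W (D : SwapData G H) : G := D.ρ34 * D.ρ23 * D.ρ12

theorem SwapData.s1 (D : SwapData G H) (u : H) : D.ι₁ u * D.W = D.W * D.ι₂ u := by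
  show D.ι₁ u * (D.ρ34 * D.ρ23 * D.ρ12) = D.ρ34 * D.ρ23 * D.ρ12 * D.ι₂ u
  simp only [mul_assoc]
  rw [mul_rotate_ctx (D.fix34_1 u), mul_rotate_ctx (D.fix23_1 u), D.swap12_a u]

theorem SwapData.s2 (D : SwapData G H) (u : H) : D.ι₂ u * D.W = D.W * D.ι₃ u := by
  show D.ι₂ u * (D.ρ34 * D.ρ23 * D.ρ12) = D.ρ34 * D.ρ23 * D.ρ12 * D.ι₃ u
  simp only [mul_assoc]
  rw [mul_rotate_ctx (D.fix34_2 u), mul_rotate_ctx (D.swap23_a u), D.fix12_3 u]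

theorem SwapData.s3 (D : SwapData G H) (u : H) : D.ι₃ u * D.W = D.W * D.ι₄ u := by
  show D.ι₃ u * (D.ρ34 * D.ρ23 * D.ρ12) = D.ρ34 * D.ρ23 * D.ρ12 * D.ι₄ u
  simp only [mul_assoc]
  rw [mul_rotate_ctx (D.swap34_a u), mul_rotate_ctx (D.fix23_4 u), D.fix12_4 u]

theorem SwapData.s4 (D : SwapData G H) (u : H) : D.ι₄ u * D.W = D.W * D.ι₁ u := by
  show D.ι₄ u * (D.ρ34 * D.ρ23 * D.ρ12) = D.ρ34 * D.ρ23 * D.ρ12 * D.ι₁ u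
  simp only [mul_assoc]
  rw [mul_rotate_ctx (D.swap34_b u), mul_rotate_ctx (D.swap23_b u), D.swap12_b u]

/-- The homomorphism `H⁴ →* G` given by the four pairwise-commuting implantings. -/
def SwapData.phi (D : SwapData G H) : H × H × H × H →* G :=
  D.ι₁.noncommCoprod
    (D.ι₂.noncommCoprod
      (D.ι₃.noncommCoprod D.ι₄ fun x y => D.comm34 x y)
      (fun x p => Commute.mul_right (D.comm23 x p.1) (D.comm24 x p.2)))
    (fun x p => Commute.mul_right (D.comm12 x p.1)
      (Commute.mul_right (D.comm13 x p.2.1) (D.comm14 x p.2.2)))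

theorem SwapData.phi_apply (D : SwapData G H) (a b c d : H) :
    D.phi (a, b, c, d) = D.ι₁ a * (D.ι₂ b * (D.ι₃ c * D.ι₄ d)) := rfl

theorem SwapData.W_shift (D : SwapData G H) (a b c d : H) :
    D.W * D.phi (a, b, c, d) = D.phi (b, c, d, a) * D.W := by
  rw [D.phi_apply a b c d, D.phi_apply b c d a]
  simp only [mul_assoc]
  rw [D.s4 a, mul_rotate_ctx (D.s3 d), mul_rotate_ctx (D.s2 c), mul_rotate_ctx (D.s1 b)]
  rw [(D.comm14 a d).symm, mul_rotate_ctx (D.comm13 a c).symm,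
    mul_rotate_ctx (D.comm12 a b).symm]

theorem SwapData.W_shift_ctx (D : SwapData G H) (a b c d : H) (x : G) :
    D.W * (D.phi (a, b, c, d) * x) = D.phi (b, c, d, a) * (D.W * x) :=
  mul_rotate_ctx (D.W_shift a b c d) x

theorem SwapData.phi_mul_ctx (D : SwapData G H) (u v : H × H × H × H) (x : G) :
    D.phi u * (D.phi v * x) = D.phi (u * v) * x := by
  rw [map_mul, mul_assoc]

/-- The key identity: the commutator `ι₁(B⁻¹A⁻¹BA)` can be absorbed into `W⁴`,
rewriting it as a product of two conjugates of `W` and two further copies of `W`. -/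
theorem SwapData.key (D : SwapData G H) (A B : H) :
    D.ι₁ (B⁻¹ * A⁻¹ * B * A) * (D.W * (D.W * (D.W * D.W))) =
      D.phi (B⁻¹, A, A, B * A) *
        (D.W * ((D.phi (B⁻¹, A, A, B * A))⁻¹ *
          (D.phi (B⁻¹ * A⁻¹, B, A⁻¹, A⁻¹) *
            (D.W * ((D.phi (B⁻¹ * A⁻¹, B, A⁻¹, A⁻¹))⁻¹ * (D.W * D.W)))))) := by
  rw [← map_inv, ← map_inv,
    D.phi_mul_ctx (B⁻¹, A, A, B * A)⁻¹ (B⁻¹ * A⁻¹, B, A⁻¹, A⁻¹)]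
  have h1 : ((B⁻¹, A, A, B * A) : H × H × H × H)⁻¹ * (B⁻¹ * A⁻¹, B, A⁻¹, A⁻¹) =
      (A⁻¹, A⁻¹ * B, A⁻¹ * A⁻¹, A⁻¹ * B⁻¹ * A⁻¹) := by
    simp only [Prod.inv_mk, Prod.mk_mul_mk, Prod.mk.injEq]
    refine ⟨?_, ?_, ?_, ?_⟩ <;> group
  have h2 : (((B⁻¹ * A⁻¹, B, A⁻¹, A⁻¹) : H × H × H × H))⁻¹ =
      ((A * B, B⁻¹, A, A) : H × H × H × H) := by
    simp only [Prod.inv_mk, Prod.mk.injEq]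
    refine ⟨?_, ?_, ?_, ?_⟩ <;> group
  rw [h1, h2]
  rw [D.W_shift_ctx A⁻¹ (A⁻¹ * B) (A⁻¹ * A⁻¹) (A⁻¹ * B⁻¹ * A⁻¹)]
  rw [D.W_shift_ctx (A * B) B⁻¹ A A]
  rw [D.W_shift_ctx B⁻¹ A A (A * B)]
  rw [D.phi_mul_ctx (A⁻¹ * B, A⁻¹ * A⁻¹, A⁻¹ * B⁻¹ * A⁻¹, A⁻¹) (A, A, A * B, B⁻¹)]
  rw [D.phi_mul_ctx (B⁻¹, A, A, B * A)
    ((A⁻¹ * B, A⁻¹ * A⁻¹, A⁻¹ * B⁻¹ * A⁻¹, A⁻¹) * (A, A, A * B, B⁻¹))]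
  have h3 : ((B⁻¹, A, A, B * A) : H × H × H × H) *
      ((A⁻¹ * B, A⁻¹ * A⁻¹, A⁻¹ * B⁻¹ * A⁻¹, A⁻¹) * (A, A, A * B, B⁻¹)) =
      (B⁻¹ * A⁻¹ * B * A, 1, 1, 1) := by
    simp only [Prod.mk_mul_mk, Prod.mk.injEq]
    refine ⟨?_, ?_, ?_, ?_⟩ <;> group
  rw [h3, D.phi_apply]
  simp

end Aux

/-- Abstract form of the main Theorem 1.1: the element `z` (the boundary
multitwist) admits factorizations into `k*m + 12*r + 16*μ` elements of the
conjugation-closed set `S` for every `m`; in particular, if `k ≥ 1`, it admits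
factorizations into elements of `S` of arbitrarily large length. -/
theorem boundary_multitwist_long_factorizations {G H : Type*} [Group G] [Group H]
    (D : SwapData G H) (S : Set G)
    (hS : ∀ g s : G, s ∈ S → g * s * g⁻¹ ∈ S) (r k μ : ℕ)
    (h12 : IsProductOf S r D.ρ12) (h23 : IsProductOf S r D.ρ23)
    (h34 : IsProductOf S r D.ρ34) (h13 : IsProductOf S r D.ρ13)
    (h24 : IsProductOf S r D.ρ24)
    (t : H) (ht : IsProductOf S k (D.ι₁ t))
    (hcomm : ∀ m : ℕ, ∃ A B : H, t ^ m * (B⁻¹ * A⁻¹ * B * A) = 1)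
    (m₁ m₂ m₃ m₄ : G)
    (hm12 : m₁ * m₂ = m₂ * m₁) (hm13 : m₁ * m₃ = m₃ * m₁) (hm14 : m₁ * m₄ = m₄ * m₁)
    (hm23 : m₂ * m₃ = m₃ * m₂) (hm24 : m₂ * m₄ = m₄ * m₂) (hm34 : m₃ * m₄ = m₄ * m₃)
    (hμ1 : IsProductOf S μ m₁) (hμ2 : IsProductOf S μ m₂)
    (hμ3 : IsProductOf S μ m₃) (hμ4 : IsProductOf S μ m₄)
    (z : G)
    (hρ13 : D.ρ13 = D.ρ12⁻¹ * D.ρ23 * D.ρ12)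
    (hρ24 : D.ρ24 = D.ρ23⁻¹ * D.ρ34 * D.ρ23)
    (hz : (D.ρ34 * D.ρ23 * D.ρ12) ^ 4 =
      z * (m₄ ^ 4)⁻¹ * (m₃ ^ 4)⁻¹ * (m₂ ^ 4)⁻¹ * (m₁ ^ 4)⁻¹) :
    (∀ m : ℕ, IsProductOf S (k * m + 12 * r + 16 * μ) z) ∧
      (1 ≤ k → ∀ N : ℕ, ∃ n : ℕ, N ≤ n ∧ IsProductOf S n z) := by
  have hmain : ∀ m : ℕ, IsProductOf S (k * m + 12 * r + 16 * μ) z := by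
    intro m
    obtain ⟨A, B, hAB⟩ := hcomm m
    have h1 : (D.ι₁ t) ^ m * D.ι₁ (B⁻¹ * A⁻¹ * B * A) = 1 := by
      rw [← map_pow, ← map_mul, hAB, map_one]
    have hz0 : z = D.W * (D.W * (D.W * D.W)) * (m₁ ^ 4 * (m₂ ^ 4 * (m₃ ^ 4 * m₄ ^ 4))) := by
      have hW : D.W * (D.W * (D.W * D.W)) = (D.ρ34 * D.ρ23 * D.ρ12) ^ 4 := by
        show (D.ρ34 * D.ρ23 * D.ρ12) * ((D.ρ34 * D.ρ23 * D.ρ12) *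
          ((D.ρ34 * D.ρ23 * D.ρ12) * (D.ρ34 * D.ρ23 * D.ρ12))) = _
        simp [pow_succ, mul_assoc]
      rw [hW, hz]
      group
    have heq : z = (D.ι₁ t) ^ m *
        ((D.phi (B⁻¹, A, A, B * A) * D.W * (D.phi (B⁻¹, A, A, B * A))⁻¹) *
          ((D.phi (B⁻¹ * A⁻¹, B, A⁻¹, A⁻¹) * D.W * (D.phi (B⁻¹ * A⁻¹, B, A⁻¹, A⁻¹))⁻¹) *
            (D.W * (D.W * (m₁ ^ 4 * (m₂ ^ 4 * (m₃ ^ 4 * m₄ ^ 4))))))) := by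
      rw [hz0]
      calc D.W * (D.W * (D.W * D.W)) * (m₁ ^ 4 * (m₂ ^ 4 * (m₃ ^ 4 * m₄ ^ 4)))
          = ((D.ι₁ t) ^ m * D.ι₁ (B⁻¹ * A⁻¹ * B * A)) *
            (D.W * (D.W * (D.W * D.W)) * (m₁ ^ 4 * (m₂ ^ 4 * (m₃ ^ 4 * m₄ ^ 4)))) := by
            rw [h1, one_mul]
        _ = (D.ι₁ t) ^ m * ((D.ι₁ (B⁻¹ * A⁻¹ * B * A) * (D.W * (D.W * (D.W * D.W)))) *
            (m₁ ^ 4 * (m₂ ^ 4 * (m₃ ^ 4 * m₄ ^ 4)))) := by group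
        _ = _ := by rw [D.key A B]; group
    have PW : IsProductOf S (r + r + r) D.W := (h34.mul' h23).mul' h12
    have P : IsProductOf S
        (k * m + (r + r + r + (r + r + r + (r + r + r + (r + r + r +
          (μ * 4 + (μ * 4 + (μ * 4 + μ * 4)))))))) z := by
      rw [heq]
      exact (ht.pow' m).mul' (((PW.conj' hS _).mul' (((PW.conj' hS _)).mul'
        (PW.mul' (PW.mul' ((hμ1.pow' 4).mul' ((hμ2.pow' 4).mul'
          ((hμ3.pow' 4).mul' (hμ4.pow' 4)))))))))
    exact P.count_eq (by ring)
  refine ⟨hmain, fun hk N => ⟨k * N + 12 * r + 16 * μ, ?_, hmain N⟩⟩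
  calc N ≤ k * N := Nat.le_mul_of_pos_left N hk
    _ ≤ k * N + 12 * r := Nat.le_add_right _ _
    _ ≤ k * N + 12 * r + 16 * μ := Nat.le_add_right _ _
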